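/- Fix a positive integer d and v ∈ I(d). Let 𝔖 be a monomial in N(v) and x an element of I(d,2d) with x ≥ v. Then x dominates 𝔖 if and only if for every α = (r,c) in 𝔖 there exists β = (R,C) in 𝔖_x with C ≤ c, r ≤ R, and the depth of β in 𝔖_x at least the depth of α in 𝔖. -/

import Mathlib

namespace OG

/-- `star d k = k* = 2d+1-k`. -/
def star (d k : ℕ) : ℕ := 2 * d + 1 - k

/-- `I(d,2d)`: the set of `d`-element subsets of `{1,…,2d}`. -/
def Idn (d : ℕ) : Set (Finset ℕ) :=
  {v | v.card = d ∧ ∀ k ∈ v, 1 ≤ k ∧ k ≤ 2 * d}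

/-- The partial order on `I(d,2d)`: entrywise comparison of increasing enumerations. -/
def leI (x y : Finset ℕ) : Prop :=
  List.Forall₂ (· ≤ ·) (x.sort (· ≤ ·)) (y.sort (· ≤ ·))

/-- `I(d)`: elements of `I(d,2d)` containing exactly one of `k`, `k*` for each `k`,
with evenly many entries exceeding `d`. -/
def Iset (d : ℕ) : Set (Finset ℕ) :=
  {v | v ∈ Idn d ∧ (∀ k, 1 ≤ k → k ≤ 2 * d → (k ∈ v ↔ star d k ∉ v)) ∧
       Even ((v.filter (fun k => d < k)).card)}

/-- membership in `N(v)`. -/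
def inN (d : ℕ) (v : Finset ℕ) (p : ℕ × ℕ) : Prop :=
  1 ≤ p.1 ∧ p.1 ≤ 2 * d ∧ 1 ≤ p.2 ∧ p.2 ≤ 2 * d ∧ p.1 ∉ v ∧ p.2 ∈ v ∧ p.2 < p.1

/-- membership in `OR(v)`. -/
def inOR (d : ℕ) (v : Finset ℕ) (p : ℕ × ℕ) : Prop :=
  1 ≤ p.1 ∧ p.1 ≤ 2 * d ∧ 1 ≤ p.2 ∧ p.2 ≤ 2 * d ∧ p.1 ∉ v ∧ p.2 ∈ v ∧ p.1 < star d p.2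

/-- membership in `ON(v) = OR(v) ∩ N(v)`. -/
def inON (d : ℕ) (v : Finset ℕ) (p : ℕ × ℕ) : Prop := inN d v p ∧ inOR d v p

/-- membership in the diagonal `D(v)`. -/
def inDiag (d : ℕ) (v : Finset ℕ) (p : ℕ × ℕ) : Prop :=
  p.1 ∉ v ∧ p.2 ∈ v ∧ p.1 = star d p.2

instance (d : ℕ) (v : Finset ℕ) : DecidablePred (inN d v) := fun p => by
  unfold inN; infer_instance

instance (d : ℕ) (v : Finset ℕ) : DecidablePred (inOR d v) := fun p => by
  unfold inOR; infer_instance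

instance (d : ℕ) (v : Finset ℕ) : DecidablePred (inON d v) := fun p => by
  unfold inON; infer_instance

instance (d : ℕ) (v : Finset ℕ) : DecidablePred (inDiag d v) := fun p => by
  unfold inDiag; infer_instance

/-- `(R,C) > (r,c)` iff `R > r` and `C < c`. -/
def pgt (A B : ℕ × ℕ) : Prop := B.1 < A.1 ∧ A.2 < B.2

instance : DecidableRel pgt := fun A B => by unfold pgt; infer_instance

/-- `(R,C)` dominates `(r,c)` iff `R ≥ r` and `C ≤ c`. -/
def pdom (A B : ℕ × ℕ) : Prop := B.1 ≤ A.1 ∧ A.2 ≤ B.2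

/-- vertical projection `p_v(r,c) = (c*,c)`. -/
def pv (d : ℕ) (α : ℕ × ℕ) : ℕ × ℕ := (star d α.2, α.2)

/-- horizontal projection `p_h(r,c) = (r,r*)`. -/
def ph (d : ℕ) (α : ℕ × ℕ) : ℕ × ℕ := (α.1, star d α.1)

/-- `(r,c)^# = (c*,r*)`. -/
def hash (d : ℕ) (α : ℕ × ℕ) : ℕ × ℕ := (star d α.2, star d α.1)

/-- A `v`-chain: a strictly decreasing (under `pgt`) list of elements of `ON(v)`. -/
def IsVChain (d : ℕ) (v : Finset ℕ) (C : List (ℕ × ℕ)) : Prop :=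
  C.Chain' pgt ∧ ∀ α ∈ C, inON d v α

/-- Two consecutive elements `(r,c) > (R,C)` of a `v`-chain are connected
if `r* ≥ C` and `R > r*`. -/
def Connected (d : ℕ) (α β : ℕ × ℕ) : Prop :=
  β.2 ≤ star d α.1 ∧ star d α.1 < β.1

instance (d : ℕ) : ∀ α β, Decidable (Connected d α β) := fun α β => by
  unfold Connected; infer_instance

/-- The connected components of a `v`-chain. -/
def components (d : ℕ) (C : List (ℕ × ℕ)) : List (List (ℕ × ℕ)) :=
  C.splitBy (fun a b => decide (Connected d a b))

/-- The three possible types of an element of a `v`-chain. -/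
inductive VType | V | H | S
deriving DecidableEq

/-- The type of an element `α` of a `v`-chain `C`: type V if `α` is not the last element
of its connected component or that component has even cardinality; otherwise type H if
`p_h(α) ∈ N(v)` (i.e. `r > r*`) and type S if not. -/
def typeOf (d : ℕ) (C : List (ℕ × ℕ)) (α : ℕ × ℕ) : VType :=
  match (components d C).find? (fun g => decide (α ∈ g)) with
  | some g =>
      if g.getLast? = some α ∧ Odd g.length then
        (if star d α.1 < α.1 then VType.H else VType.S)
      else VType.V
  | none => VType.V

/-- `𝔖_{C,α}`. -/
def SCa (d : ℕ) (C : List (ℕ × ℕ)) (α : ℕ × ℕ) : Multiset (ℕ × ℕ) :=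
  match typeOf d C α with
  | VType.V => {pv d α}
  | VType.H => {pv d α, ph d α}
  | VType.S => {α, hash d α}

/-- `𝔖_C`: the multiset union of the `𝔖_{C,α}` over `α ∈ C`. -/
def SC (d : ℕ) (C : List (ℕ × ℕ)) : Multiset (ℕ × ℕ) :=
  (C.map (fun α => SCa d C α)).sum

/-- `q_{C,α}`. -/
def qCa (d : ℕ) (C : List (ℕ × ℕ)) (α : ℕ × ℕ) : ℕ × ℕ :=
  match typeOf d C α with
  | VType.S => α
  | _ => pv d α

/-- A strictly decreasing chain of elements of the monomial `S`. -/
def IsChainIn (S : Multiset (ℕ × ℕ)) (L : List (ℕ × ℕ)) : Prop :=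
  L.Chain' pgt ∧ ∀ β ∈ L, β ∈ S

/-- The depth of `α` in a monomial `S` of `N(v)`: the maximal length of a strictly
decreasing chain of elements of `S` ending at `α`. -/
noncomputable def depth (S : Multiset (ℕ × ℕ)) (α : ℕ × ℕ) : ℕ :=
  sSup {k | ∃ L, IsChainIn S L ∧ L.getLast? = some α ∧ L.length = k}

/-- The o-depth of `α` in a `v`-chain `C`: the depth of `q_{C,α}` in `𝔖_C`. -/
noncomputable def odepthC (d : ℕ) (C : List (ℕ × ℕ)) (α : ℕ × ℕ) : ℕ :=
  depth (SC d C) (qCa d C α)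

/-- The o-depth of `α` in a monomial `S` of `ON(v)`: the maximum of `odepthC` over
all `v`-chains in `S` containing `α`. -/
noncomputable def odepthM (d : ℕ) (v : Finset ℕ) (S : Multiset (ℕ × ℕ)) (α : ℕ × ℕ) : ℕ :=
  sSup {k | ∃ C, IsVChain d v C ∧ (∀ β ∈ C, β ∈ S) ∧ α ∈ C ∧ odepthC d C α = k}

/-- A distinguished subset of `N(v)`. -/
def Distinguished (d : ℕ) (v : Finset ℕ) (S : Finset (ℕ × ℕ)) : Prop :=
  (∀ p ∈ S, inN d v p) ∧
  ∀ A ∈ S, ∀ B ∈ S, A ≠ B →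
    A.1 ≠ B.1 ∧ A.2 ≠ B.2 ∧ (B.1 < A.1 → (B.1 < A.2 ∨ A.2 < B.2))

/-- The element of `I(d,2d)` attached to a distinguished subset `S` of `N(v)`:
remove from `v` the column indices of elements of `S` and add their row indices. -/
def toW (v : Finset ℕ) (S : Finset (ℕ × ℕ)) : Finset ℕ :=
  (v \ S.image Prod.snd) ∪ S.image Prod.fst

/-- `w(C) = w_C`, the element of `I(d,2d)` attached to the `v`-chain `C` via the
distinguished subset `𝔖_C`. -/
def wC (d : ℕ) (v : Finset ℕ) (C : List (ℕ × ℕ)) : Finset ℕ :=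
  toW v (SC d C).toFinset

/-- `w` ortho-dominates a monomial `S` in `ON(v)`: `w ≥ w(C)` for every `v`-chain
`C` contained in `S`. -/
def ODominates (d : ℕ) (v w : Finset ℕ) (S : Multiset (ℕ × ℕ)) : Prop :=
  ∀ C : List (ℕ × ℕ), IsVChain d v C → (∀ β ∈ C, β ∈ S) → leI (wC d v C) w

/-- `x` dominates a monomial `S` in `N(v)` (in the sense of the Grassmannian case):
`x ≥ w_L` for every strictly decreasing chain `L` contained in `S`. -/
def Dominates (d : ℕ) (v x : Finset ℕ) (S : Multiset (ℕ × ℕ)) : Prop :=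
  ∀ L : List (ℕ × ℕ), L.Chain' pgt → (∀ β ∈ L, β ∈ S) → leI (toW v L.toFinset) x

/-- The `v`-degree of `θ`: half the cardinality of `v \ θ`. -/
def vdeg (v θ : Finset ℕ) : ℕ := (v \ θ).card / 2

/-- the element next to `α` in the list `C`. -/
def nextInC (C : List (ℕ × ℕ)) (α : ℕ × ℕ) : Option (ℕ × ℕ) :=
  C[C.idxOf α + 1]?

/-- The critical element of a `v`-chain: its first element whose horizontal projection
does not belong to `N(v)` (i.e. with `r ≤ r*`). -/
def critical (d : ℕ) (C : List (ℕ × ℕ)) : Option (ℕ × ℕ) :=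
  C.find? (fun x => decide (x.1 ≤ star d x.1))

/-- `α` is the last element of its connected component in `C`. -/
def isCompLast (d : ℕ) (C : List (ℕ × ℕ)) (α : ℕ × ℕ) : Prop :=
  ∃ g ∈ components d C, g.getLast? = some α

/-- The condition (*): `α` has type H in `C` and `p_h(α) ≯ β'` for some `β' ∈ 𝔖_{C,β}`. -/
def starCond (d : ℕ) (C : List (ℕ × ℕ)) (α β : ℕ × ℕ) : Prop :=
  typeOf d C α = VType.H ∧ ∃ β' ∈ SCa d C β, ¬ pgt (ph d α) β'

/-- A standard monomial in `I(d)`: a weakly decreasing sequence of elements of `I(d)`. -/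
def IsStdMon (d : ℕ) (L : List (Finset ℕ)) : Prop :=
  (∀ θ ∈ L, θ ∈ Iset d) ∧ L.Chain' (fun a b => leI b a)

/-- A standard monomial is `w`-dominated if `w ≥ θ₁`. -/
def WDominated (w : Finset ℕ) (L : List (Finset ℕ)) : Prop :=
  ∀ θ, L.head? = some θ → leI θ w

/-- A standard monomial is `v`-compatible if each member is comparable with `v`
and distinct from `v`. -/
def VCompatible (v : Finset ℕ) (L : List (Finset ℕ)) : Prop :=
  ∀ θ ∈ L, θ ≠ v ∧ (leI θ v ∨ leI v θ)

/-- The degree of a standard monomial: the sum of the `v`-degrees of its members. -/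
def stdDeg (v : Finset ℕ) (L : List (Finset ℕ)) : ℕ :=
  (L.map (fun θ => vdeg v θ)).sum

end OG

/-! For a rook placement `F` (rows outside `v`, columns in `v`), the number of entries `≥ t` of
`toW v F` is that of `v` plus the number `cov F t` of rooks `(r, c)` with `c < t ≤ r`. Comparing
sorted sequences amounts to comparing these counts for every `t`, so `x` dominates `𝔖` iff
`cov L t ≤ cov 𝔖_x t` for every chain `L` of `𝔖` and every `t`.

Every element of a chain ending at `α = (r, c)` covers each `t ∈ (c, r]`; this compares depths
with covering numbers in both directions. For the forward implication one picks `t ∈ (c, r]` such that every element of `𝔖_x` covering `t` dominates `α`;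
distinguishedness makes these elements a chain. -/

namespace OG

open Finset

section GaleOrder

variable {α : Type*} [LinearOrder α]

lemma getElem_le_of_mem_drop {l : List α} (hl : l.Pairwise (· ≤ ·)) {i : ℕ} (hi : i < l.length)
    {z : α} (hz : z ∈ l.drop i) : l[i] ≤ z := by
  obtain ⟨j, hj, rfl⟩ := List.mem_iff_getElem.mp hz
  rw [List.length_drop] at hj
  rw [List.getElem_drop]
  exact hl.rel_get_of_le (a := ⟨i, hi⟩) (b := ⟨i + j, by omega⟩) (Nat.le_add_right i j)

lemma le_getElem_of_mem_take {l : List α} (hl : l.Pairwise (· ≤ ·)) {i : ℕ} (hi : i < l.length)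
    {z : α} (hz : z ∈ l.take (i + 1)) : z ≤ l[i] := by
  obtain ⟨j, hj, rfl⟩ := List.mem_iff_getElem.mp hz
  rw [List.length_take, lt_min_iff] at hj
  rw [List.getElem_take]
  exact hl.rel_get_of_le (a := ⟨j, hj.2⟩) (b := ⟨i, hi⟩) (Nat.le_of_lt_succ hj.1)

lemma length_sub_le_countP {l : List α} (hl : l.Pairwise (· ≤ ·)) {i : ℕ} (hi : i < l.length) :
    l.length - i ≤ l.countP (fun k => l[i] ≤ k) := by
  have hall : (l.drop i).countP (fun k => l[i] ≤ k) = (l.drop i).length :=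
    List.countP_eq_length.mpr fun z hz => decide_eq_true (getElem_le_of_mem_drop hl hi hz)
  rw [← List.length_drop, ← hall]
  exact (List.drop_sublist i l).countP_le

lemma countP_le_length_sub {l : List α} (hl : l.Pairwise (· ≤ ·)) {i : ℕ} (hi : i < l.length)
    {t : α} (ht : l[i] < t) : l.countP (fun k => t ≤ k) ≤ l.length - (i + 1) := by
  have htake : (l.take (i + 1)).countP (fun k => t ≤ k) = 0 :=
    List.countP_eq_zero.mpr fun z hz => by
      simpa using lt_of_le_of_lt (le_getElem_of_mem_take hl hi hz) ht
  calc l.countP (fun k => t ≤ k)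
      = (l.take (i + 1)).countP (fun k => t ≤ k) + (l.drop (i + 1)).countP (fun k => t ≤ k) := by
        rw [← List.countP_append, List.take_append_drop]
    _ ≤ (l.drop (i + 1)).length := by rw [htake, zero_add]; exact List.countP_le_length
    _ = l.length - (i + 1) := List.length_drop

lemma countP_le_countP_of_forall₂ {a b : List α} (h : List.Forall₂ (· ≤ ·) a b) (t : α) :
    a.countP (fun k => t ≤ k) ≤ b.countP (fun k => t ≤ k) := by
  induction h with
  | nil => rfl
  | @cons p q _ _ hpq _ ih =>
    simp only [List.countP_cons]
    by_cases hp : t ≤ p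
    · simp [hp, hp.trans hpq, ih]
    · by_cases hq : t ≤ q <;> simp [hp, hq] <;> omega

lemma forall₂_of_countP_le {a b : List α} (ha : a.Pairwise (· ≤ ·)) (hb : b.Pairwise (· ≤ ·))
    (hlen : a.length = b.length)
    (h : ∀ t, a.countP (fun k => t ≤ k) ≤ b.countP (fun k => t ≤ k)) :
    List.Forall₂ (· ≤ ·) a b := by
  refine List.forall₂_iff_get.mpr ⟨hlen, fun i hia hib => ?_⟩
  by_contra! hlt
  simp only [List.get_eq_getElem] at hlt
  have := (length_sub_le_countP ha hia).trans
    ((h a[i]).trans (countP_le_length_sub hb hib hlt))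
  omega

lemma countP_sort (y : Finset α) (t : α) :
    (y.sort (· ≤ ·)).countP (fun k => t ≤ k) = #{k ∈ y | t ≤ k} := by
  rw [(y.sort_perm_toList _).countP_eq, ← Multiset.coe_countP, Finset.coe_toList,
    Multiset.countP_eq_card_filter, Finset.card_def, Finset.filter_val]

theorem leI_iff_card_filter_le {y x : Finset ℕ} (h : #y = #x) :
    leI y x ↔ ∀ t, #{k ∈ y | t ≤ k} ≤ #{k ∈ x | t ≤ k} := by
  simp only [← countP_sort]
  refine ⟨fun hle t => countP_le_countP_of_forall₂ hle t, fun hc => ?_⟩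
  exact forall₂_of_countP_le (y.pairwise_sort _) (x.pairwise_sort _)
    (by rw [Finset.length_sort, Finset.length_sort, h]) hc

end GaleOrder

structure IsRookPlacement (v : Finset ℕ) (F : Finset (ℕ × ℕ)) : Prop where
  snd_mem : ∀ α ∈ F, α.2 ∈ v
  fst_notMem : ∀ α ∈ F, α.1 ∉ v
  snd_lt_fst : ∀ α ∈ F, α.2 < α.1
  injOn_fst : Set.InjOn Prod.fst (F : Set (ℕ × ℕ))
  injOn_snd : Set.InjOn Prod.snd (F : Set (ℕ × ℕ))

def cov (F : Finset (ℕ × ℕ)) (t : ℕ) : ℕ := #{α ∈ F | t ∈ Ioc α.2 α.1}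

lemma cov_mono {F G : Finset (ℕ × ℕ)} (h : F ⊆ G) (t : ℕ) : cov F t ≤ cov G t :=
  card_le_card (filter_subset_filter _ h)

namespace IsRookPlacement

variable {v : Finset ℕ} {F : Finset (ℕ × ℕ)}

lemma of_inN {d : ℕ} (hN : ∀ α ∈ F, inN d v α)
    (hF : ∀ A ∈ F, ∀ B ∈ F, A ≠ B → A.1 ≠ B.1 ∧ A.2 ≠ B.2) : IsRookPlacement v F where
  snd_mem α hα := (hN α hα).2.2.2.2.2.1
  fst_notMem α hα := (hN α hα).2.2.2.2.1
  snd_lt_fst α hα := (hN α hα).2.2.2.2.2.2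
  injOn_fst A hA B hB := not_imp_not.mp fun hne => (hF A hA B hB hne).1
  injOn_snd A hA B hB := not_imp_not.mp fun hne => (hF A hA B hB hne).2

lemma card_filter_toW_add (hF : IsRookPlacement v F) (p : ℕ → Prop) [DecidablePred p] :
    #{k ∈ toW v F | p k} + #{α ∈ F | p α.2} = #{k ∈ v | p k} + #{α ∈ F | p α.1} := by
  have hcols : #{k ∈ F.image Prod.snd | p k} = #{α ∈ F | p α.2} := by
    rw [filter_image, card_image_of_injOn (hF.injOn_snd.mono (coe_subset.mpr (filter_subset _ _)))]
  have hrows : #{k ∈ F.image Prod.fst | p k} = #{α ∈ F | p α.1} := by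
    rw [filter_image, card_image_of_injOn (hF.injOn_fst.mono (coe_subset.mpr (filter_subset _ _)))]
  have hsub : {k ∈ F.image Prod.snd | p k} ⊆ {k ∈ v | p k} :=
    filter_subset_filter _ fun c hc => by
      obtain ⟨α, hα, rfl⟩ := mem_image.mp hc
      exact hF.snd_mem α hα
  have hdisj : Disjoint {k ∈ v \ F.image Prod.snd | p k} {k ∈ F.image Prod.fst | p k} :=
    disjoint_filter_filter <| disjoint_right.mpr fun r hr hrv => by
      obtain ⟨α, hα, rfl⟩ := mem_image.mp hr
      exact hF.fst_notMem α hα (mem_sdiff.mp hrv).1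
  have hsdiff : {k ∈ v \ F.image Prod.snd | p k} = {k ∈ v | p k} \ {k ∈ F.image Prod.snd | p k} := by
    ext; simp only [mem_filter, mem_sdiff]; tauto
  have hle := card_le_card hsub
  rw [toW, filter_union, card_union_of_disjoint hdisj, hsdiff, card_sdiff_of_subset hsub]
  omega

lemma card_toW (hF : IsRookPlacement v F) : #(toW v F) = #v := by
  simpa using hF.card_filter_toW_add (fun _ => True)

lemma card_filter_le_fst (hF : IsRookPlacement v F) (t : ℕ) :
    #{α ∈ F | t ≤ α.1} = #{α ∈ F | t ≤ α.2} + cov F t := by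
  have hsplit : {α ∈ F | t ≤ α.1} = {α ∈ F | t ≤ α.2} ∪ {α ∈ F | t ∈ Ioc α.2 α.1} := by
    rw [← filter_or]
    refine filter_congr fun α hα => ?_
    have := hF.snd_lt_fst α hα
    rw [mem_Ioc]
    omega
  rw [hsplit, card_union_of_disjoint, cov]
  exact disjoint_filter.mpr fun α _ h h' => by rw [mem_Ioc] at h'; omega

lemma card_filter_le_toW (hF : IsRookPlacement v F) (t : ℕ) :
    #{k ∈ toW v F | t ≤ k} = #{k ∈ v | t ≤ k} + cov F t := by
  have := hF.card_filter_toW_add (t ≤ ·)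
  rw [hF.card_filter_le_fst] at this
  omega

theorem leI_toW_iff {G : Finset (ℕ × ℕ)} (hF : IsRookPlacement v F) (hG : IsRookPlacement v G) :
    leI (toW v F) (toW v G) ↔ ∀ t, cov F t ≤ cov G t := by
  rw [leI_iff_card_filter_le (by rw [hF.card_toW, hG.card_toW])]
  simp only [hF.card_filter_le_toW, hG.card_filter_le_toW, Nat.add_le_add_iff_left]

end IsRookPlacement

section Chains

instance : IsTrans (ℕ × ℕ) pgt :=
  ⟨fun _ _ _ h₁ h₂ => ⟨h₂.1.trans h₁.1, h₁.2.trans h₂.2⟩⟩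

lemma ne_of_pgt {A B : ℕ × ℕ} (h : pgt A B) : A ≠ B := by
  rintro rfl
  exact lt_irrefl _ h.1

variable {L : List (ℕ × ℕ)}

lemma nodup_of_chain (hL : L.IsChain pgt) : L.Nodup :=
  (List.isChain_iff_pairwise.mp hL).imp ne_of_pgt

lemma pgt_or_pgt_of_chain (hL : L.IsChain pgt) {A B : ℕ × ℕ} (hA : A ∈ L) (hB : B ∈ L)
    (hne : A ≠ B) : pgt A B ∨ pgt B A :=
  have : Std.Symm fun a b => pgt a b ∨ pgt b a := ⟨fun _ _ => Or.symm⟩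
  List.Pairwise.forall (R := fun a b => pgt a b ∨ pgt b a)
    ((List.isChain_iff_pairwise.mp hL).imp Or.inl) hA hB hne

lemma isRookPlacement_toFinset {d : ℕ} {v : Finset ℕ} (hL : L.IsChain pgt)
    (hN : ∀ α ∈ L, inN d v α) : IsRookPlacement v L.toFinset := by
  refine .of_inN (fun α hα => hN α (List.mem_toFinset.mp hα)) fun A hA B hB hne => ?_
  rw [List.mem_toFinset] at hA hB
  rcases pgt_or_pgt_of_chain hL hA hB hne with h | h
  exacts [⟨h.1.ne', h.2.ne⟩, ⟨h.1.ne, h.2.ne'⟩]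

lemma Ioc_subset_of_mem_chain (hL : L.IsChain pgt) {α γ : ℕ × ℕ} (hl : L.getLast? = some α)
    (hγ : γ ∈ L) : Ioc α.2 α.1 ⊆ Ioc γ.2 γ.1 := by
  have hpw : L.Pairwise fun a b => Ioc b.2 b.1 ⊆ Ioc a.2 a.1 :=
    (List.isChain_iff_pairwise.mp hL).imp fun h => Ioc_subset_Ioc h.2.le h.1.le
  rw [List.getLast?_eq_some_getLast (List.ne_nil_of_mem hγ), Option.some_inj] at hl
  exact hl ▸ hpw.rel_getLast_of_rel_getLast_getLast hγ subset_rfl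

lemma length_le_cov_of_chain (hL : L.IsChain pgt) {α : ℕ × ℕ} (hl : L.getLast? = some α)
    {t : ℕ} (ht : t ∈ Ioc α.2 α.1) : L.length ≤ cov L.toFinset t := by
  rw [cov, filter_true_of_mem fun γ hγ => Ioc_subset_of_mem_chain hL hl (List.mem_toFinset.mp hγ) ht,
    List.toFinset_card_of_nodup (nodup_of_chain hL)]

lemma exists_chain_toFinset_eq (F : Finset (ℕ × ℕ))
    (hF : (F : Set (ℕ × ℕ)).Pairwise fun A B => pgt A B ∨ pgt B A) :
    ∃ L : List (ℕ × ℕ), L.IsChain pgt ∧ L.toFinset = F := by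
  set L := F.toList.mergeSort fun a b => decide (b.1 ≤ a.1)
  have hsorted : L.Pairwise fun a b => decide (b.1 ≤ a.1) = true :=
    List.pairwise_mergeSort (by simp only [decide_eq_true_eq]; omega)
      (by simp only [Bool.or_eq_true, decide_eq_true_eq]; omega) _
  have hnodup : L.Nodup := (List.mergeSort_perm _ _).nodup_iff.mpr F.nodup_toList
  have hmem : ∀ {a}, a ∈ L ↔ a ∈ F := by simp [L, List.mem_mergeSort]
  refine ⟨L, List.isChain_iff_pairwise.mpr ((hsorted.and hnodup).imp_of_mem ?_), by ext; simp [hmem]⟩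
  rintro a b ha hb ⟨hle, hne⟩
  rcases hF (hmem.mp ha) (hmem.mp hb) hne with h | h
  · exact h
  · simp only [decide_eq_true_eq] at hle
    exact absurd h.1 (not_lt.mpr hle)

end Chains

section Depth

variable {S : Multiset (ℕ × ℕ)} {L : List (ℕ × ℕ)} {α : ℕ × ℕ}

lemma IsChainIn.length_le (h : IsChainIn S L) : L.length ≤ #S.toFinset := by
  rw [← List.toFinset_card_of_nodup (nodup_of_chain h.1)]
  exact card_le_card fun γ hγ => Multiset.mem_toFinset.mpr (h.2 γ (List.mem_toFinset.mp hγ))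

lemma bddAbove_chain_lengths (S : Multiset (ℕ × ℕ)) (α : ℕ × ℕ) :
    BddAbove {k | ∃ L, IsChainIn S L ∧ L.getLast? = some α ∧ L.length = k} := by
  refine ⟨#S.toFinset, ?_⟩
  rintro _ ⟨L, hL, -, rfl⟩
  exact hL.length_le

lemma IsChainIn.length_le_depth (h : IsChainIn S L) (hl : L.getLast? = some α) :
    L.length ≤ depth S α :=
  le_csSup (bddAbove_chain_lengths S α) ⟨L, h, hl, rfl⟩

lemma depth_le {n : ℕ} (h : ∀ L, IsChainIn S L → L.getLast? = some α → L.length ≤ n) :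
    depth S α ≤ n := by
  rcases Set.eq_empty_or_nonempty {k | ∃ L, IsChainIn S L ∧ L.getLast? = some α ∧ L.length = k}
    with he | hne
  · rw [depth, he, csSup_empty]
    exact Nat.zero_le n
  · exact csSup_le hne fun k ⟨L, hL, hl, hk⟩ => hk ▸ h L hL hl

lemma exists_isChainIn_length_eq_depth (hα : α ∈ S) :
    ∃ L, IsChainIn S L ∧ L.getLast? = some α ∧ L.length = depth S α := by
  refine Nat.sSup_mem ?_ (bddAbove_chain_lengths S α)
  exact ⟨1, [α], ⟨List.isChain_singleton α, by simpa using hα⟩, rfl, rfl⟩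

lemma depth_val_le_cov {G : Finset (ℕ × ℕ)} {β : ℕ × ℕ} {t : ℕ} (ht : t ∈ Ioc β.2 β.1) :
    depth G.val β ≤ cov G t :=
  depth_le fun _ hL hl => (length_le_cov_of_chain hL.1 hl ht).trans
    (cov_mono (fun γ hγ => hL.2 γ (List.mem_toFinset.mp hγ)) t)

lemma exists_card_le_depth_of_pairwise {F G : Finset (ℕ × ℕ)} (hFG : F ⊆ G) (hF : F.Nonempty)
    (hpw : (F : Set (ℕ × ℕ)).Pairwise fun A B => pgt A B ∨ pgt B A) :
    ∃ β ∈ F, #F ≤ depth G.val β := by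
  obtain ⟨L, hL, hLF⟩ := exists_chain_toFinset_eq F hpw
  have hmem : ∀ {γ}, γ ∈ L ↔ γ ∈ F := by simp [← hLF]
  have hne : L ≠ [] := fun h => by simp [← hLF, h] at hF
  refine ⟨L.getLast hne, hmem.mp (List.getLast_mem hne), ?_⟩
  rw [← hLF, List.toFinset_card_of_nodup (nodup_of_chain hL)]
  exact IsChainIn.length_le_depth ⟨hL, fun γ hγ => hFG (hmem.mp hγ)⟩
    (List.getLast?_eq_some_getLast hne)

/-- The elements of `L` covering `t` form a subchain; its last element is deep enough. -/
lemma IsChainIn.exists_cov_le_depth (hL : IsChainIn S L) {t : ℕ} (hpos : 0 < cov L.toFinset t) :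
    ∃ α ∈ L, t ∈ Ioc α.2 α.1 ∧ cov L.toFinset t ≤ depth S α := by
  set P := L.filter fun γ => t ∈ Ioc γ.2 γ.1
  have hcov : cov L.toFinset t = P.length := by
    have hP : {γ ∈ L.toFinset | t ∈ Ioc γ.2 γ.1} = P.toFinset := by ext; simp [P]
    rw [cov, hP, List.toFinset_card_of_nodup ((nodup_of_chain hL.1).sublist List.filter_sublist)]
  have hP : P ≠ [] := by
    rintro h
    simp [hcov, h] at hpos
  have hlast : P.getLast hP ∈ L ∧ t ∈ Ioc (P.getLast hP).2 (P.getLast hP).1 := by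
    simpa [P] using List.getLast_mem hP
  refine ⟨P.getLast hP, hlast.1, hlast.2, hcov ▸ IsChainIn.length_le_depth ⟨?_, ?_⟩
    (List.getLast?_eq_some_getLast hP)⟩
  · exact List.isChain_iff_pairwise.mpr
      ((List.isChain_iff_pairwise.mp hL.1).sublist List.filter_sublist)
  · exact fun γ hγ => hL.2 γ (List.mem_filter.mp hγ).1

end Depth

namespace Distinguished

variable {d : ℕ} {v : Finset ℕ} {D : Finset (ℕ × ℕ)}

lemma isRookPlacement (hD : Distinguished d v D) : IsRookPlacement v D :=
  .of_inN hD.1 fun A hA B hB hne => ⟨(hD.2 A hA B hB hne).1, (hD.2 A hA B hB hne).2.1⟩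

/-- Take `t = α.1`, unless some `β ∈ D` has `α.2 < β.2 < α.1 ≤ β.1`; then take the least such
`β.2`. In both cases distinguishedness rules out elements covering `t` but not dominating `α`. -/
lemma exists_mem_Ioc_forall_pdom (hD : Distinguished d v D) {α : ℕ × ℕ} (hα : α.2 < α.1) :
    ∃ t ∈ Ioc α.2 α.1, ∀ β ∈ D, t ∈ Ioc β.2 β.1 → pdom β α := by
  set R := {β ∈ D | α.2 < β.2 ∧ β.2 < α.1 ∧ α.1 ≤ β.1}
  rcases R.eq_empty_or_nonempty with hR | hR
  · refine ⟨α.1, mem_Ioc.mpr ⟨hα, le_rfl⟩, fun β hβ ht => ?_⟩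
    rw [mem_Ioc] at ht
    refine ⟨ht.2, ?_⟩
    by_contra! h
    have : β ∈ R := mem_filter.mpr ⟨hβ, h, ht.1, ht.2⟩
    simp [hR] at this
  · obtain ⟨ρ, hρR, hρmin⟩ := R.exists_min_image Prod.snd hR
    obtain ⟨hρ, hρ₁, hρ₂, hρ₃⟩ := mem_filter.mp hρR
    refine ⟨ρ.2, mem_Ioc.mpr ⟨hρ₁, hρ₂.le⟩, fun β hβ ht => ?_⟩
    rw [mem_Ioc] at ht
    have hβρ : β ≠ ρ := by
      rintro rfl
      exact lt_irrefl _ ht.1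
    have hrow : α.1 ≤ β.1 := by
      by_contra! h
      rcases (hD.2 ρ hρ β hβ hβρ.symm).2.2 (by omega) with h' | h' <;> omega
    refine ⟨hrow, ?_⟩
    by_contra! h
    have := hρmin β (mem_filter.mpr ⟨hβ, h, by omega, hrow⟩)
    omega

lemma pgt_or_pgt_of_pdom (hD : Distinguished d v D) {α β γ : ℕ × ℕ} (hα : α.2 < α.1)
    (hβ : β ∈ D) (hγ : γ ∈ D) (hne : β ≠ γ) (hβα : pdom β α) (hγα : pdom γ α) :
    pgt β γ ∨ pgt γ β := by
  unfold pdom at hβα hγα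
  rcases lt_or_gt_of_ne (hD.2 β hβ γ hγ hne).1 with h | h
  · rcases (hD.2 γ hγ β hβ hne.symm).2.2 h with h' | h'
    exacts [absurd h' (by omega), Or.inr ⟨h, h'⟩]
  · rcases (hD.2 β hβ γ hγ hne).2.2 h with h' | h'
    exacts [absurd h' (by omega), Or.inl ⟨h, h'⟩]

lemma exists_pdom_depth_le (hD : Distinguished d v D) {S : Multiset (ℕ × ℕ)} {α : ℕ × ℕ}
    (hα : α ∈ S) (hαlt : α.2 < α.1)
    (hcov : ∀ L, IsChainIn S L → ∀ t, cov L.toFinset t ≤ cov D t) :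
    ∃ β ∈ D, pdom β α ∧ depth S α ≤ depth D.val β := by
  obtain ⟨L, hL, hl, hlen⟩ := exists_isChainIn_length_eq_depth hα
  obtain ⟨t, ht, hdom⟩ := hD.exists_mem_Ioc_forall_pdom hαlt
  have hLD : L.length ≤ #{β ∈ D | t ∈ Ioc β.2 β.1} :=
    (length_le_cov_of_chain hL.1 hl ht).trans (hcov L hL t)
  have hne : {β ∈ D | t ∈ Ioc β.2 β.1}.Nonempty :=
    card_pos.mp ((List.length_pos_of_mem (List.mem_of_mem_getLast? hl)).trans_le hLD)
  obtain ⟨β, hβ, hdepth⟩ := exists_card_le_depth_of_pairwise (filter_subset _ D) hne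
    fun β hβ γ hγ hβγ => by
      rw [coe_filter] at hβ hγ
      exact hD.pgt_or_pgt_of_pdom hαlt hβ.1 hγ.1 hβγ (hdom β hβ.1 hβ.2) (hdom γ hγ.1 hγ.2)
  rw [mem_filter] at hβ
  exact ⟨β, hβ.1, hdom β hβ.1 hβ.2, hlen ▸ hLD.trans hdepth⟩

end Distinguished

lemma cov_le_of_forall_exists_pdom {S : Multiset (ℕ × ℕ)} {G : Finset (ℕ × ℕ)}
    (h : ∀ α ∈ S, ∃ β ∈ G, pdom β α ∧ depth S α ≤ depth G.val β)
    {L : List (ℕ × ℕ)} (hL : IsChainIn S L) (t : ℕ) : cov L.toFinset t ≤ cov G t := by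
  rcases Nat.eq_zero_or_pos (cov L.toFinset t) with h0 | hpos
  · exact h0 ▸ Nat.zero_le _
  obtain ⟨α, hαL, ht, hle⟩ := hL.exists_cov_le_depth hpos
  obtain ⟨β, -, ⟨h₁, h₂⟩, hdepth⟩ := h α (hL.2 α hαL)
  exact hle.trans (hdepth.trans (depth_val_le_cov (Ioc_subset_Ioc h₂ h₁ ht)))

lemma dominates_toW_iff {d : ℕ} {v : Finset ℕ} {S : Multiset (ℕ × ℕ)} {D : Finset (ℕ × ℕ)}
    (hS : ∀ α ∈ S, inN d v α) (hD : Distinguished d v D) :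
    Dominates d v (toW v D) S ↔ ∀ L, IsChainIn S L → ∀ t, cov L.toFinset t ≤ cov D t := by
  have hR : ∀ L, IsChainIn S L → IsRookPlacement v L.toFinset := fun _ hL =>
    isRookPlacement_toFinset hL.1 fun α hα => hS α (hL.2 α hα)
  refine forall_congr' fun L => ⟨fun h hL => ?_, fun h hch hmem => ?_⟩
  · exact ((hR L hL).leI_toW_iff hD.isRookPlacement).mp (h hL.1 hL.2)
  · exact ((hR L ⟨hch, hmem⟩).leI_toW_iff hD.isRookPlacement).mpr (h ⟨hch, hmem⟩)

end OG

open OG in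
theorem stmt18_general (d : ℕ) (v : Finset ℕ)
    (S : Multiset (ℕ × ℕ)) (hS : ∀ α ∈ S, inN d v α)
    (x : Finset ℕ)
    (Sx : Finset (ℕ × ℕ)) (hdist : Distinguished d v Sx) (hSx : toW v Sx = x) :
    Dominates d v x S ↔
      ∀ α ∈ S, ∃ β ∈ Sx, β.2 ≤ α.2 ∧ α.1 ≤ β.1 ∧
        depth S α ≤ depth (Sx.val) β := by
  subst hSx
  rw [dominates_toW_iff hS hdist]
  constructor
  · intro hcov α hα
    obtain ⟨β, hβ, ⟨h₁, h₂⟩, hdepth⟩ := hdist.exists_pdom_depth_le hα (hS α hα).2.2.2.2.2.2 hcov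
    exact ⟨β, hβ, h₂, h₁, hdepth⟩
  · intro h L hL
    refine cov_le_of_forall_exists_pdom (fun α hα => ?_) hL
    obtain ⟨β, hβ, h₂, h₁, hdepth⟩ := h α hα
    exact ⟨β, hβ, ⟨h₁, h₂⟩, hdepth⟩

open OG in
/-- characterization of domination via elements of `𝔖_x` of at least
the same depth. -/
theorem stmt18 (d : ℕ) (hd : 0 < d) (v : Finset ℕ) (hv : v ∈ Iset d)
    (S : Multiset (ℕ × ℕ)) (hS : ∀ α ∈ S, inN d v α)
    (x : Finset ℕ) (hx : x ∈ Idn d) (hvx : leI v x)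
    (Sx : Finset (ℕ × ℕ)) (hdist : Distinguished d v Sx) (hSx : toW v Sx = x) :
    Dominates d v x S ↔
      ∀ α ∈ S, ∃ β ∈ Sx, β.2 ≤ α.2 ∧ α.1 ≤ β.1 ∧
        depth S α ≤ depth (Sx.val) β :=
  stmt18_general d v S hS x Sx hdist hSx
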